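/- arXiv:1005.4794 — 2 statements merged into one kernel-verified Lean document; each statement's English description precedes it below -/
import Mathlib

section
/- For every integer n with 0 ≤ n ≤ d+1, the function ξ ↦ ‖D^n K̂_φ(ξ)‖ (the norm of the n-th pointwise iterated derivative of K̂_φ, taken on ℝ^d ∖ {0}) is integrable over ℝ^d; i.e. K̂_φ has all pointwise derivatives up to order d+1 in L¹(ℝ^d). -/
open Real MeasureTheory
open scoped RealInnerProductSpace ENNReal NNReal



private lemma aux_exp_poly_bound (a : ℝ) (ha : 0 < a) (m : ℕ) (r : ℝ) (hr : 0 ≤ r) :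
    Real.exp (-a * r ^ 2) * (1 + r) ^ m ≤ Real.exp ((m : ℝ) + m ^ 2 / (4 * a)) := by
  have h1 : (1 + r) ^ m ≤ Real.exp ((m : ℝ) * (1 + r)) := by
    calc (1 + r) ^ m ≤ (Real.exp (1 + r)) ^ m :=
          pow_le_pow_left₀ (by linarith) (by linarith [Real.add_one_le_exp (1 + r)]) m
      _ = Real.exp ((m : ℝ) * (1 + r)) := (Real.exp_nat_mul _ m).symm
  calc Real.exp (-a * r ^ 2) * (1 + r) ^ m
      ≤ Real.exp (-a * r ^ 2) * Real.exp ((m : ℝ) * (1 + r)) := by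
        exact mul_le_mul_of_nonneg_left h1 (Real.exp_nonneg _)
    _ = Real.exp ((m : ℝ) * (1 + r) - a * r ^ 2) := by rw [← Real.exp_add]; ring_nf
    _ ≤ Real.exp ((m : ℝ) + m ^ 2 / (4 * a)) := by
        apply Real.exp_le_exp.2
        have e : (m : ℝ) ^ 2 / (4 * a) * (4 * a) = (m : ℝ) ^ 2 :=
          div_mul_cancel₀ _ (by positivity)
        nlinarith [sq_nonneg (2 * a * r - (m : ℝ)), e, ha]

private lemma aux_contOn_iteratedFDeriv {E F : Type*} [NormedAddCommGroup E] [NormedSpace ℝ E]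
    [NormedAddCommGroup F] [NormedSpace ℝ F] {f : E → F} {s : Set E} (hs : IsOpen s)
    (hf : ContDiffOn ℝ (⊤ : ℕ∞) f s) (i : ℕ) :
    ContinuousOn (fun x => iteratedFDeriv ℝ i f x) s :=
  (hf.continuousOn_iteratedFDerivWithin (m := i) (by exact_mod_cast le_top) hs.uniqueDiffOn).congr
    (fun _ hx => (iteratedFDerivWithin_of_isOpen i hs hx).symm)

private lemma aux_deriv_homog {E : Type*} [NormedAddCommGroup E] [NormedSpace ℝ E]
    {h : E → ℝ} (hh : ContDiffOn ℝ (⊤ : ℕ∞) h ({0}ᶜ : Set E))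
    (hom : ∀ t : ℝ, 0 < t → ∀ ξ, h (t • ξ) = t ^ 2 * h ξ) (i : ℕ) (C : ℝ) (hC0 : 0 ≤ C)
    (hC : ∀ x : E, ‖x‖ = 1 → ‖iteratedFDeriv ℝ i h x‖ ≤ C) :
    ∀ ξ : E, ξ ≠ 0 → ‖iteratedFDeriv ℝ i h ξ‖ ≤ C * (‖ξ‖ ^ 2 * (‖ξ‖⁻¹) ^ i) := by
  intro ξ hξ
  have hU : IsOpen ({0}ᶜ : Set E) := isOpen_compl_singleton
  have hUu : UniqueDiffOn ℝ ({0}ᶜ : Set E) := hU.uniqueDiffOn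
  have hmem : ξ ∈ ({0}ᶜ : Set E) := hξ
  set t : ℝ := ‖ξ‖ with htdef
  have ht : 0 < t := norm_pos_iff.2 hξ
  set L : E →L[ℝ] E := t⁻¹ • ContinuousLinearMap.id ℝ E with hLdef
  have hLapp : ∀ x, L x = t⁻¹ • x := fun x => rfl
  have hpre : L ⁻¹' ({0}ᶜ : Set E) = ({0}ᶜ : Set E) := by
    ext x
    simp [hLapp, smul_eq_zero, inv_eq_zero, ht.ne']
  have hLmem : L ξ ∈ ({0}ᶜ : Set E) := by
    simp [hLapp, smul_eq_zero, inv_eq_zero, ht.ne', hξ]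
  have hLnorm : ‖L ξ‖ = 1 := by
    rw [hLapp, norm_smul, norm_inv, Real.norm_eq_abs, abs_of_pos ht, ← htdef,
      inv_mul_cancel₀ ht.ne']
  have hcomp : ContDiffOn ℝ (⊤ : ℕ∞) (h ∘ L) ({0}ᶜ : Set E) := by
    have := hh.comp_continuousLinearMap L
    rwa [hpre] at this
  set h' : E → ℝ := (t ^ 2) • (h ∘ L) with hh'def
  have hfun : h = h' := by
    funext x
    have h1 := hom t ht (t⁻¹ • x)
    rw [smul_smul, mul_inv_cancel₀ ht.ne', one_smul] at h1
    simp only [hh'def, Pi.smul_apply, Function.comp_apply, hLapp, smul_eq_mul]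
    exact h1
  have e0 : iteratedFDeriv ℝ i h ξ = iteratedFDerivWithin ℝ i h ({0}ᶜ) ξ :=
    (iteratedFDerivWithin_of_isOpen i hU hmem).symm
  have e1 : iteratedFDerivWithin ℝ i h ({0}ᶜ) ξ = iteratedFDerivWithin ℝ i h' ({0}ᶜ) ξ := by
    rw [hfun]
  have e2 : iteratedFDerivWithin ℝ i h' ({0}ᶜ) ξ
      = (t ^ 2) • iteratedFDerivWithin ℝ i (h ∘ L) ({0}ᶜ) ξ :=
    iteratedFDerivWithin_const_smul_apply ((hcomp ξ hmem).of_le (by exact_mod_cast le_top)) hUu hmem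
  have e3 := L.iteratedFDerivWithin_comp_right hh hUu (by rw [hpre]; exact hUu) hLmem (show ((i : ℕ) : WithTop ℕ∞) ≤ ((⊤ : ℕ∞) : WithTop ℕ∞) by exact_mod_cast le_top)
  rw [hpre] at e3
  have hLn : ‖L‖ ≤ t⁻¹ := by
    apply ContinuousLinearMap.opNorm_le_bound _ (inv_pos.2 ht).le
    intro x
    rw [hLapp, norm_smul, norm_inv, Real.norm_eq_abs, abs_of_pos ht]
  have hMn : ‖iteratedFDerivWithin ℝ i h ({0}ᶜ : Set E) (L ξ)‖ ≤ C := by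
    rw [iteratedFDerivWithin_of_isOpen i hU hLmem]
    exact hC _ hLnorm
  calc ‖iteratedFDeriv ℝ i h ξ‖
      = ‖(t ^ 2) • ((iteratedFDerivWithin ℝ i h ({0}ᶜ : Set E) (L ξ)).compContinuousLinearMap
          fun _ => L)‖ := by rw [e0, e1, e2, e3]
    _ ≤ t ^ 2 * ‖(iteratedFDerivWithin ℝ i h ({0}ᶜ : Set E) (L ξ)).compContinuousLinearMap
          fun _ => L‖ := by
        have h1 := norm_smul_le (t ^ 2) ((iteratedFDerivWithin ℝ i h ({0}ᶜ : Set E)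
          (L ξ)).compContinuousLinearMap fun _ => L)
        rwa [Real.norm_eq_abs, abs_of_nonneg (sq_nonneg t)] at h1
    _ ≤ t ^ 2 * (‖iteratedFDerivWithin ℝ i h ({0}ᶜ : Set E) (L ξ)‖ * ∏ _j : Fin i, ‖L‖) := by
        gcongr
        exact ContinuousMultilinearMap.norm_compContinuousLinearMap_le _ _
    _ ≤ t ^ 2 * (C * (t⁻¹) ^ i) := by
        have : (∏ _j : Fin i, ‖L‖) ≤ (t⁻¹) ^ i := by
          rw [Finset.prod_const, Finset.card_univ, Fintype.card_fin]
          exact pow_le_pow_left₀ (norm_nonneg _) hLn i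
        have h2 := mul_le_mul hMn this (Finset.prod_nonneg fun _ _ => norm_nonneg _) hC0
        exact mul_le_mul_of_nonneg_left h2 (sq_nonneg t)
    _ = C * (t ^ 2 * (t⁻¹) ^ i) := by ring

private lemma aux_comp_bound {E : Type*} [NormedAddCommGroup E] [NormedSpace ℝ E]
    {h : E → ℝ} (hh : ContDiffOn ℝ (⊤ : ℕ∞) h ({0}ᶜ : Set E))
    {c lam2 : ℝ} (hc1 : 1 ≤ c) (hlam2 : 0 ≤ lam2)
    (hlow : ∀ ξ : E, lam2 * ‖ξ‖ ^ 2 ≤ h ξ)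
    (n : ℕ) (Cf : ℕ → ℝ)
    (hCf : ∀ i, 1 ≤ i → i ≤ n → ∀ ξ : E, ξ ≠ 0 →
      ‖iteratedFDeriv ℝ i h ξ‖ ≤ Cf i * (‖ξ‖ ^ 2 * (‖ξ‖⁻¹) ^ i))
    (ξ : E) (hξ : ξ ≠ 0) (D : ℝ)
    (hD : ∀ i, 1 ≤ i → i ≤ n → Cf i * (‖ξ‖ ^ 2 * (‖ξ‖⁻¹) ^ i) ≤ D ^ i) :
    ‖iteratedFDeriv ℝ n (fun x => Real.exp (-c * h x)) ξ‖ ≤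
      (n.factorial : ℝ) * (c ^ n * Real.exp (-(c * lam2) * ‖ξ‖ ^ 2)) * D ^ n := by
  have hU : IsOpen ({0}ᶜ : Set E) := isOpen_compl_singleton
  have hUu : UniqueDiffOn ℝ ({0}ᶜ : Set E) := hU.uniqueDiffOn
  have hmem : ξ ∈ ({0}ᶜ : Set E) := hξ
  have hc0 : (0:ℝ) < c := lt_of_lt_of_le one_pos hc1
  set g : ℝ → ℝ := fun s => Real.exp (-c * s) with hgdef
  have hg : ContDiff ℝ (⊤ : ℕ∞) g := (contDiff_const.mul contDiff_id).exp
  -- derivative bounds for g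
  have hgder : ∀ (i : ℕ) (y : ℝ), ‖iteratedFDeriv ℝ i g y‖ = c ^ i * Real.exp (-c * y) := by
    intro i y
    rw [norm_iteratedFDeriv_eq_norm_iteratedDeriv]
    have : iteratedDeriv i g = fun s => (-c) ^ i * Real.exp (-c * s) :=
      iteratedDeriv_exp_const_mul i (-c)
    rw [this]
    simp only [Real.norm_eq_abs, abs_mul, abs_pow, abs_neg, abs_of_pos hc0,
      abs_of_pos (Real.exp_pos _)]
  have hCbound : ∀ i, i ≤ n → ‖iteratedFDerivWithin ℝ i g Set.univ (h ξ)‖ ≤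
      c ^ n * Real.exp (-(c * lam2) * ‖ξ‖ ^ 2) := by
    intro i hi
    rw [iteratedFDerivWithin_univ, hgder]
    have h1 : c ^ i ≤ c ^ n := pow_le_pow_right₀ hc1 hi
    have h2 : Real.exp (-c * h ξ) ≤ Real.exp (-(c * lam2) * ‖ξ‖ ^ 2) := by
      apply Real.exp_le_exp.2
      have := hlow ξ
      nlinarith
    exact mul_le_mul h1 h2 (Real.exp_nonneg _) (by positivity)
  have hDbound : ∀ i, 1 ≤ i → i ≤ n →
      ‖iteratedFDerivWithin ℝ i h ({0}ᶜ : Set E) ξ‖ ≤ D ^ i := by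
    intro i h1 h2
    rw [iteratedFDerivWithin_of_isOpen i hU hmem]
    exact le_trans (hCf i h1 h2 ξ hξ) (hD i h1 h2)
  have key := norm_iteratedFDerivWithin_comp_le (g := g) (f := h) (s := ({0}ᶜ : Set E))
    (t := Set.univ) hg.contDiffOn hh (show ((n : ℕ) : WithTop ℕ∞) ≤ ((⊤ : ℕ∞) : WithTop ℕ∞) by exact_mod_cast le_top) uniqueDiffOn_univ hUu
    (Set.mapsTo_univ h _) hmem hCbound hDbound
  rw [iteratedFDerivWithin_of_isOpen n hU hmem] at key
  exact key


set_option maxHeartbeats 2000000 in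
/-- For every `0 ≤ n ≤ d+1`, the function `ξ ↦ ‖D^n K̂_φ(ξ)‖` is integrable
over `ℝ^d`, where `K̂_φ(ξ) = exp (-4π² φ°(ξ)²)`: all pointwise derivatives of `K̂_φ` up to
order `d+1` are in `L¹(ℝ^d)`. -/
theorem stmt_2 (d : ℕ) (hd : 1 ≤ d)
    (φ : EuclideanSpace ℝ (Fin d) → ℝ)
    (lam Lam : ℝ) (hlam : 0 < lam) (hlamLam : lam ≤ Lam)
    (heven : ∀ ξ, φ (-ξ) = φ ξ)
    (hhomog : ∀ t : ℝ, 0 ≤ t → ∀ ξ, φ (t • ξ) = t * φ ξ)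
    (hconv : ConvexOn ℝ Set.univ φ)
    (hsmooth : ContDiffOn ℝ (⊤ : ℕ∞) φ {0}ᶜ)
    (hlow : ∀ ξ, lam * ‖ξ‖ ≤ φ ξ) (hup : ∀ ξ, φ ξ ≤ Lam * ‖ξ‖)
    (n : ℕ) (hn : n ≤ d + 1) :
    Integrable (fun ξ : EuclideanSpace ℝ (Fin d) =>
      ‖iteratedFDeriv ℝ n (fun ξ => Real.exp (-(4 * π ^ 2) * φ ξ ^ 2)) ξ‖) := by
  classical
  haveI hnt : Nontrivial (EuclideanSpace ℝ (Fin d)) := by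
    apply Module.nontrivial_of_finrank_pos (R := ℝ)
    rw [finrank_euclideanSpace_fin]
    exact hd
  set c : ℝ := 4 * π ^ 2 with hcdef
  have hc1 : (1:ℝ) ≤ c := by nlinarith [Real.pi_gt_three]
  have hc0 : (0:ℝ) < c := lt_of_lt_of_le one_pos hc1
  set f : EuclideanSpace ℝ (Fin d) → ℝ := fun ξ => Real.exp (-c * φ ξ ^ 2) with hfdef
  set F : EuclideanSpace ℝ (Fin d) → ℝ := fun ξ => ‖iteratedFDeriv ℝ n f ξ‖ with hFdef
  clear_value c
  have hU : IsOpen ({0}ᶜ : Set (EuclideanSpace ℝ (Fin d))) := isOpen_compl_singleton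
  have hh : ContDiffOn ℝ (⊤ : ℕ∞) (fun ξ : EuclideanSpace ℝ (Fin d) => φ ξ ^ 2) {0}ᶜ := hsmooth.pow 2
  have hom : ∀ t : ℝ, 0 < t → ∀ ξ : EuclideanSpace ℝ (Fin d),
      (fun ξ => φ ξ ^ 2) (t • ξ) = t ^ 2 * (fun ξ => φ ξ ^ 2) ξ := by
    intro t ht ξ
    simp only
    rw [hhomog t ht.le]
    ring
  have hf : ContDiffOn ℝ (⊤ : ℕ∞) f {0}ᶜ := (contDiffOn_const.mul hh).exp
  have hFcont : ContinuousOn F ({0}ᶜ : Set (EuclideanSpace ℝ (Fin d))) :=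
    (aux_contOn_iteratedFDeriv hU hf n).norm
  -- constants bounding iterated derivatives of φ^2
  have hCex : ∀ i : ℕ, ∃ C : ℝ, 0 ≤ C ∧ ∀ ξ : EuclideanSpace ℝ (Fin d), ξ ≠ 0 →
      ‖iteratedFDeriv ℝ i (fun ξ => φ ξ ^ 2) ξ‖ ≤ C * (‖ξ‖ ^ 2 * (‖ξ‖⁻¹) ^ i) := by
    intro i
    have hsub : Metric.sphere (0 : EuclideanSpace ℝ (Fin d)) 1 ⊆ {0}ᶜ := by
      intro x hx
      rw [mem_sphere_zero_iff_norm] at hx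
      intro h0
      rw [Set.mem_singleton_iff] at h0
      rw [h0, norm_zero] at hx
      norm_num at hx
    obtain ⟨C, hC⟩ := (isCompact_sphere (0 : EuclideanSpace ℝ (Fin d)) 1).exists_bound_of_continuousOn
      ((aux_contOn_iteratedFDeriv hU hh i).mono hsub)
    refine ⟨max C 0, le_max_right _ _, aux_deriv_homog hh hom i (max C 0) (le_max_right _ _) ?_⟩
    intro x hx
    exact le_trans (hC x (mem_sphere_zero_iff_norm.2 hx)) (le_max_left _ _)
  choose Cf hCf0 hCfb using hCex
  set B : ℝ := 1 + ∑ i ∈ Finset.range (n + 1), Cf i with hBdef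
  clear_value B
  have hB1 : (1:ℝ) ≤ B := by
    have : (0:ℝ) ≤ ∑ i ∈ Finset.range (n + 1), Cf i :=
      Finset.sum_nonneg fun i _ => hCf0 i
    simp only [hBdef]
    linarith
  have hB0 : (0:ℝ) < B := lt_of_lt_of_le one_pos hB1
  have hBi : ∀ i, i ≤ n → Cf i ≤ B := by
    intro i hi
    have h1 : Cf i ≤ ∑ j ∈ Finset.range (n + 1), Cf j :=
      Finset.single_le_sum (fun j _ => hCf0 j) (Finset.mem_range.2 (Nat.lt_succ_of_le hi))
    simp only [hBdef]
    linarith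
  have hlow2 : ∀ ξ : EuclideanSpace ℝ (Fin d), lam ^ 2 * ‖ξ‖ ^ 2 ≤ (fun ξ => φ ξ ^ 2) ξ := by
    intro ξ
    have h1 := hlow ξ
    have h2 : 0 ≤ lam * ‖ξ‖ := mul_nonneg hlam.le (norm_nonneg _)
    show lam ^ 2 * ‖ξ‖ ^ 2 ≤ φ ξ ^ 2
    nlinarith
  have hlam2 : (0:ℝ) ≤ lam ^ 2 := sq_nonneg _
  -- the master pointwise bound
  have key : ∀ ξ : EuclideanSpace ℝ (Fin d), ξ ≠ 0 → ∀ D : ℝ,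
      (∀ i, 1 ≤ i → i ≤ n → Cf i * (‖ξ‖ ^ 2 * (‖ξ‖⁻¹) ^ i) ≤ D ^ i) →
      F ξ ≤ (n.factorial : ℝ) * (c ^ n * Real.exp (-(c * lam ^ 2) * ‖ξ‖ ^ 2)) * D ^ n := by
    intro ξ hξ D hD
    exact aux_comp_bound hh hc1 hlam2 hlow2 n Cf (fun i _ _ => hCfb i) ξ hξ D hD
  -- reduce to integrability away from the origin
  have hres : (volume : Measure (EuclideanSpace ℝ (Fin d))).restrict
      ({(0 : EuclideanSpace ℝ (Fin d))}ᶜ) = volume :=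
    MeasureTheory.restrict_compl_singleton _
  rw [← hres]
  have hFnonneg : ∀ ξ, 0 ≤ F ξ := fun ξ => norm_nonneg _
  -- outer region
  have houter : IntegrableOn F {x : EuclideanSpace ℝ (Fin d) | 1 ≤ ‖x‖} := by
    have hSmeas : MeasurableSet {x : EuclideanSpace ℝ (Fin d) | 1 ≤ ‖x‖} :=
      (isClosed_le continuous_const continuous_norm).measurableSet
    have hSU : {x : EuclideanSpace ℝ (Fin d) | 1 ≤ ‖x‖} ⊆ {0}ᶜ := by
      intro x hx h0
      rw [Set.mem_singleton_iff] at h0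
      rw [Set.mem_setOf_eq, h0, norm_zero] at hx
      norm_num at hx
    set a : ℝ := c * lam ^ 2 with hadef
    have ha : 0 < a := by positivity
    clear_value a
    set m : ℕ := n + d + 1 with hmdef
    set A : ℝ := (n.factorial : ℝ) * c ^ n * B ^ n *
      Real.exp ((m : ℝ) + (m : ℝ) ^ 2 / (4 * a)) with hAdef
    clear_value A
    have hmaj : Integrable (fun x : EuclideanSpace ℝ (Fin d) =>
        A * (1 + ‖x‖) ^ (-((d : ℝ) + 1))) := by
      apply Integrable.const_mul
      apply integrable_one_add_norm
      rw [finrank_euclideanSpace_fin]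
      linarith
    apply Integrable.mono' hmaj.integrableOn
      ((hFcont.mono hSU).aestronglyMeasurable hSmeas)
    rw [ae_restrict_iff' hSmeas]
    filter_upwards with x hx
    have hr1 : (1:ℝ) ≤ ‖x‖ := hx
    have hr0 : (0:ℝ) < ‖x‖ := lt_of_lt_of_le one_pos hr1
    have hx0 : x ≠ 0 := by
      intro h0
      rw [h0, norm_zero] at hr1
      norm_num at hr1
    have hD : ∀ i, 1 ≤ i → i ≤ n → Cf i * (‖x‖ ^ 2 * (‖x‖⁻¹) ^ i) ≤ (B * ‖x‖) ^ i := by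
      intro i h1 h2
      have hinv1 : ‖x‖⁻¹ ≤ 1 := inv_le_one_of_one_le₀ hr1
      have hinv0 : (0:ℝ) ≤ ‖x‖⁻¹ := inv_nonneg.2 hr0.le
      have e1 : (‖x‖⁻¹) ^ i ≤ ‖x‖⁻¹ := by
        calc (‖x‖⁻¹) ^ i ≤ (‖x‖⁻¹) ^ 1 := pow_le_pow_of_le_one hinv0 hinv1 h1
          _ = ‖x‖⁻¹ := pow_one _
      have e2 : ‖x‖ ^ 2 * ‖x‖⁻¹ = ‖x‖ := by
        field_simp
      have e3 : Cf i * (‖x‖ ^ 2 * (‖x‖⁻¹) ^ i) ≤ B * ‖x‖ := by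
        calc Cf i * (‖x‖ ^ 2 * (‖x‖⁻¹) ^ i) ≤ B * (‖x‖ ^ 2 * ‖x‖⁻¹) := by
              apply mul_le_mul (hBi i h2) _ (by positivity) (by linarith)
              exact mul_le_mul_of_nonneg_left e1 (by positivity)
          _ = B * ‖x‖ := by rw [e2]
      calc Cf i * (‖x‖ ^ 2 * (‖x‖⁻¹) ^ i) ≤ B * ‖x‖ := e3
        _ = (B * ‖x‖) ^ 1 := (pow_one _).symm
        _ ≤ (B * ‖x‖) ^ i := pow_le_pow_right₀ (by nlinarith) h1
    have hkey := key x hx0 (B * ‖x‖) hD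
    rw [Real.norm_of_nonneg (hFnonneg x)]
    refine le_trans hkey ?_
    -- now the numeric estimate
    have hz : (0:ℝ) < (1 + ‖x‖) ^ (d + 1) := by positivity
    have hrpow : (1 + ‖x‖) ^ (-((d : ℝ) + 1)) = ((1 + ‖x‖) ^ (d + 1 : ℕ))⁻¹ := by
      rw [← Real.rpow_natCast (1 + ‖x‖) (d + 1), ← Real.rpow_neg (by positivity)]
      norm_num
    rw [hrpow, ← div_eq_mul_inv, le_div_iff₀ hz]
    have e4 : ‖x‖ ^ n * (1 + ‖x‖) ^ (d + 1) ≤ (1 + ‖x‖) ^ m := by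
      have e4' : (1 + ‖x‖) ^ m = (1 + ‖x‖) ^ n * (1 + ‖x‖) ^ (d + 1) := by
        rw [← pow_add]; congr 1 <;> omega
      rw [e4']
      exact mul_le_mul_of_nonneg_right
        (pow_le_pow_left₀ (norm_nonneg _) (by linarith) n) (by positivity)
    have e5 := aux_exp_poly_bound a ha m ‖x‖ (norm_nonneg x)
    calc (n.factorial : ℝ) * (c ^ n * Real.exp (-a * ‖x‖ ^ 2)) * (B * ‖x‖) ^ n *
          (1 + ‖x‖) ^ (d + 1)
        = ((n.factorial : ℝ) * c ^ n * B ^ n) *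
          (Real.exp (-a * ‖x‖ ^ 2) * (‖x‖ ^ n * (1 + ‖x‖) ^ (d + 1))) := by
          rw [mul_pow]; ring
      _ ≤ ((n.factorial : ℝ) * c ^ n * B ^ n) *
          (Real.exp (-a * ‖x‖ ^ 2) * (1 + ‖x‖) ^ m) := by
          apply mul_le_mul_of_nonneg_left _ (by positivity)
          exact mul_le_mul_of_nonneg_left e4 (Real.exp_nonneg _)
      _ ≤ ((n.factorial : ℝ) * c ^ n * B ^ n) * Real.exp ((m : ℝ) + (m : ℝ) ^ 2 / (4 * a)) := by
          apply mul_le_mul_of_nonneg_left e5 (by positivity)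
      _ = A := by rw [hAdef]
  -- inner region
  have hinner : IntegrableOn F (Metric.ball (0 : EuclideanSpace ℝ (Fin d)) 1 \ {0}) := by
    have hTmeas : MeasurableSet (Metric.ball (0 : EuclideanSpace ℝ (Fin d)) 1 \ {0}) :=
      measurableSet_ball.diff (measurableSet_singleton _)
    have hTU : Metric.ball (0 : EuclideanSpace ℝ (Fin d)) 1 \ {0} ⊆ {0}ᶜ := fun x hx => hx.2
    have hTvol : volume (Metric.ball (0 : EuclideanSpace ℝ (Fin d)) 1 \ {0}) < ⊤ :=
      lt_of_le_of_lt (measure_mono Set.diff_subset) measure_ball_lt_top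
    refine ⟨(hFcont.mono hTU).aestronglyMeasurable hTmeas, ?_⟩
    rw [HasFiniteIntegral]
    rcases Nat.eq_zero_or_pos n with hn0 | hn1
    · -- n = 0 : the function is bounded by 1
      have hb : ∀ x : EuclideanSpace ℝ (Fin d), (‖F x‖₊ : ℝ≥0∞) ≤ 1 := by
        intro x
        have h1 : F x ≤ 1 := by
          show ‖iteratedFDeriv ℝ n f x‖ ≤ 1
          rw [hn0, norm_iteratedFDeriv_zero]
          show ‖Real.exp (-c * φ x ^ 2)‖ ≤ 1
          rw [Real.norm_eq_abs, abs_of_pos (Real.exp_pos _), Real.exp_le_one_iff]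
          nlinarith [sq_nonneg (φ x)]
        have h2 : ‖F x‖₊ ≤ (1 : ℝ≥0) := by
          rw [← NNReal.coe_le_coe, coe_nnnorm, NNReal.coe_one, Real.norm_of_nonneg (hFnonneg x)]
          exact h1
        exact_mod_cast h2
      calc ∫⁻ a in Metric.ball (0 : EuclideanSpace ℝ (Fin d)) 1 \ {0}, (‖F a‖₊ : ℝ≥0∞)
          ≤ ∫⁻ _a in Metric.ball (0 : EuclideanSpace ℝ (Fin d)) 1 \ {0}, (1 : ℝ≥0∞) :=
            lintegral_mono fun a => hb a
        _ = volume (Metric.ball (0 : EuclideanSpace ℝ (Fin d)) 1 \ {0}) := by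
            rw [setLIntegral_const, one_mul]
        _ < ⊤ := hTvol
    · -- n ≥ 1 : dyadic shells around the origin
      set rk : ℕ → ℝ := fun k => (2⁻¹ : ℝ) ^ k with hrkdef
      have hrkpos : ∀ k, 0 < rk k := fun k => pow_pos (by norm_num) k
      have hrkle1 : ∀ k, rk k ≤ 1 := fun k => pow_le_one₀ (by norm_num) (by norm_num)
      set Ak : ℕ → Set (EuclideanSpace ℝ (Fin d)) :=
        fun k => {x | rk k / 2 < ‖x‖ ∧ ‖x‖ ≤ rk k} with hAkdef
      have hcover : Metric.ball (0 : EuclideanSpace ℝ (Fin d)) 1 \ {0} ⊆ ⋃ k, Ak k := by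
        rintro x ⟨hball, hx0⟩
        have h0 : 0 < ‖x‖ := norm_pos_iff.2 hx0
        have h1 : ‖x‖ < 1 := mem_ball_zero_iff.1 hball
        have hex : ∃ k : ℕ, rk k / 2 < ‖x‖ := by
          obtain ⟨k, hk⟩ : ∃ k : ℕ, (2⁻¹ : ℝ) ^ k < ‖x‖ :=
            exists_pow_lt_of_lt_one h0 (by norm_num)
          refine ⟨k, ?_⟩
          have h2 := hrkpos k
          have h3 : rk k = (2⁻¹ : ℝ) ^ k := by simp only [hrkdef]
          rw [h3] at h2 ⊢
          linarith
        set k := Nat.find hex with hkdef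
        have hk1 : rk k / 2 < ‖x‖ := Nat.find_spec hex
        have hk2 : ‖x‖ ≤ rk k := by
          rcases Nat.eq_zero_or_pos k with hk0 | hkpos
          · rw [hk0]
            have : rk 0 = 1 := by simp [hrkdef]
            rw [this]
            exact h1.le
          · have hmin := Nat.find_min hex (show k - 1 < k from Nat.sub_lt hkpos one_pos)
            push_neg at hmin
            have e : rk (k - 1) / 2 = rk k := by
              simp only [hrkdef]
              rw [div_eq_mul_inv, ← pow_succ]
              congr 1
              omega
            rw [← e]
            exact hmin
        exact Set.mem_iUnion.2 ⟨k, hk1, hk2⟩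
      set ρ : ℕ → ℝ := fun k => (rk k ^ 2) ^ ((1 : ℝ) / n) with hρdef
      have hρpos : ∀ k, 0 < ρ k := fun k =>
        Real.rpow_pos_of_pos (by positivity) _
      have hρle1 : ∀ k, ρ k ≤ 1 := by
        intro k
        apply Real.rpow_le_one (by positivity) _ (by positivity)
        nlinarith [hrkpos k, hrkle1 k]
      have hρn : ∀ k, ρ k ^ n = rk k ^ 2 := by
        intro k
        have h3 : ρ k = (rk k ^ 2) ^ ((1 : ℝ) / n) := by simp only [hρdef]
        rw [h3, ← Real.rpow_natCast ((rk k ^ 2) ^ ((1 : ℝ) / n)) n,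
          ← Real.rpow_mul (by positivity), one_div,
          inv_mul_cancel₀ (show (n : ℝ) ≠ 0 by exact_mod_cast hn1.ne'), Real.rpow_one]
      have hshell : ∀ k, ∀ x ∈ Ak k,
          F x ≤ (n.factorial : ℝ) * c ^ n * (B * (2 / rk k) * ρ k) ^ n := by
        intro k x hx
        obtain ⟨hx1, hx2⟩ := hx
        have hx0 : x ≠ 0 := by
          intro h0
          rw [h0, norm_zero] at hx1
          nlinarith [hrkpos k]
        have hxpos : 0 < ‖x‖ := norm_pos_iff.2 hx0
        have hDk0 : 0 ≤ B * (2 / rk k) * ρ k :=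
          mul_nonneg (mul_nonneg hB0.le (div_pos two_pos (hrkpos k)).le) (hρpos k).le
        have hD : ∀ i, 1 ≤ i → i ≤ n →
            Cf i * (‖x‖ ^ 2 * (‖x‖⁻¹) ^ i) ≤ (B * (2 / rk k) * ρ k) ^ i := by
          intro i h1 h2
          have hi1 : ‖x‖ ^ 2 ≤ rk k ^ 2 := pow_le_pow_left₀ (norm_nonneg _) hx2 2
          have hi2 : ‖x‖⁻¹ ≤ 2 / rk k := by
            have h4 : ‖x‖⁻¹ ≤ (rk k / 2)⁻¹ :=
              inv_anti₀ (half_pos (hrkpos k)) hx1.le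
            rwa [inv_div] at h4
          have hi3 : (‖x‖⁻¹) ^ i ≤ (2 / rk k) ^ i :=
            pow_le_pow_left₀ (by positivity) hi2 i
          have hi4 : Cf i ≤ B ^ i := le_trans (hBi i h2) (le_self_pow₀ hB1 (by omega))
          have hi5 : rk k ^ 2 ≤ ρ k ^ i := by
            calc rk k ^ 2 = ρ k ^ n := (hρn k).symm
              _ ≤ ρ k ^ i := pow_le_pow_of_le_one (hρpos k).le (hρle1 k) h2
          calc Cf i * (‖x‖ ^ 2 * (‖x‖⁻¹) ^ i)
              ≤ B ^ i * (ρ k ^ i * (2 / rk k) ^ i) := by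
                apply mul_le_mul hi4 _ (by positivity) (pow_nonneg hB0.le i)
                exact mul_le_mul (le_trans hi1 hi5) hi3 (by positivity)
                  (pow_nonneg (hρpos k).le i)
            _ = (B * (2 / rk k) * ρ k) ^ i := by
                rw [mul_pow, mul_pow]
                ring
        have hkey := key x hx0 _ hD
        refine le_trans hkey ?_
        have hexp : Real.exp (-(c * lam ^ 2) * ‖x‖ ^ 2) ≤ 1 := by
          rw [Real.exp_le_one_iff]
          nlinarith [mul_nonneg hc0.le (mul_nonneg (sq_nonneg lam) (sq_nonneg ‖x‖))]
        calc (n.factorial : ℝ) * (c ^ n * Real.exp (-(c * lam ^ 2) * ‖x‖ ^ 2)) *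
              (B * (2 / rk k) * ρ k) ^ n
            = ((n.factorial : ℝ) * c ^ n * (B * (2 / rk k) * ρ k) ^ n) *
              Real.exp (-(c * lam ^ 2) * ‖x‖ ^ 2) := by ring
          _ ≤ ((n.factorial : ℝ) * c ^ n * (B * (2 / rk k) * ρ k) ^ n) * 1 := by
              apply mul_le_mul_of_nonneg_left hexp
              exact mul_nonneg (mul_nonneg (Nat.cast_nonneg _) (pow_nonneg hc0.le n))
                (pow_nonneg hDk0 n)
          _ = (n.factorial : ℝ) * c ^ n * (B * (2 / rk k) * ρ k) ^ n := mul_one _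
      set v1 := volume (Metric.ball (0 : EuclideanSpace ℝ (Fin d)) 1) with hv1def
      have hv1top : v1 < ⊤ := measure_ball_lt_top
      set K : ℝ := (n.factorial : ℝ) * c ^ n * B ^ n * 2 ^ n with hKdef
      have hK0 : (0:ℝ) ≤ K := by
        rw [hKdef]
        exact mul_nonneg (mul_nonneg (mul_nonneg (Nat.cast_nonneg _)
          (pow_nonneg hc0.le n)) (pow_nonneg hB0.le n)) (by positivity)
      have halg : ∀ k, ((n.factorial : ℝ) * c ^ n * (B * (2 / rk k) * ρ k) ^ n) * rk k ^ d
          ≤ K * (2⁻¹ : ℝ) ^ k := by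
        intro k
        have h1 : (B * (2 / rk k) * ρ k) ^ n = B ^ n * (2 ^ n / rk k ^ n) * rk k ^ 2 := by
          rw [mul_pow, mul_pow, hρn k, div_pow]
        have h2 : rk k ^ 2 * rk k ^ d / rk k ^ n = rk k ^ (2 + d - n) := by
          rw [← pow_add, div_eq_mul_inv, ← pow_sub₀ (rk k) (hrkpos k).ne' (show n ≤ 2 + d by omega)]
        have h3 : rk k ^ (2 + d - n) ≤ (2⁻¹ : ℝ) ^ k := by
          have h4 : rk k ^ (2 + d - n) = (2⁻¹ : ℝ) ^ (k * (2 + d - n)) := by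
            simp only [hrkdef]
            rw [← pow_mul]
          rw [h4]
          apply pow_le_pow_of_le_one (by norm_num) (by norm_num)
          have h5 : 1 ≤ 2 + d - n := by omega
          calc k = k * 1 := (mul_one k).symm
            _ ≤ k * (2 + d - n) := Nat.mul_le_mul_left k h5
        calc ((n.factorial : ℝ) * c ^ n * (B * (2 / rk k) * ρ k) ^ n) * rk k ^ d
            = K * (rk k ^ 2 * rk k ^ d / rk k ^ n) := by
              rw [h1, hKdef]
              field_simp
          _ = K * rk k ^ (2 + d - n) := by rw [h2]
          _ ≤ K * (2⁻¹ : ℝ) ^ k := mul_le_mul_of_nonneg_left h3 hK0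
      have hAkvol : ∀ k, volume (Ak k) ≤ ENNReal.ofReal (rk k ^ d) * v1 := by
        intro k
        calc volume (Ak k) ≤ volume (Metric.closedBall (0 : EuclideanSpace ℝ (Fin d)) (rk k)) :=
              measure_mono (fun x hx => mem_closedBall_zero_iff.2 hx.2)
          _ = ENNReal.ofReal (rk k ^ d) * v1 := by
              rw [Measure.addHaar_closedBall volume 0 (hrkpos k).le,
                finrank_euclideanSpace_fin]
      have hAkint : ∀ k, ∫⁻ a in Ak k, (‖F a‖₊ : ℝ≥0∞) ≤
          ENNReal.ofReal (K * (2⁻¹ : ℝ) ^ k) * v1 := by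
        intro k
        have hbk0 : (0:ℝ) ≤ (n.factorial : ℝ) * c ^ n * (B * (2 / rk k) * ρ k) ^ n := by
          apply mul_nonneg (mul_nonneg (Nat.cast_nonneg _) (pow_nonneg hc0.le n))
          apply pow_nonneg
          exact mul_nonneg (mul_nonneg hB0.le (div_pos two_pos (hrkpos k)).le) (hρpos k).le
        calc ∫⁻ a in Ak k, (‖F a‖₊ : ℝ≥0∞)
            ≤ ∫⁻ _a in Ak k, ENNReal.ofReal
              ((n.factorial : ℝ) * c ^ n * (B * (2 / rk k) * ρ k) ^ n) := by
              apply setLIntegral_mono measurable_const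
              intro x hx
              rw [← enorm_eq_nnnorm, ← ofReal_norm, Real.norm_of_nonneg (hFnonneg x)]
              exact ENNReal.ofReal_le_ofReal (hshell k x hx)
          _ = ENNReal.ofReal ((n.factorial : ℝ) * c ^ n * (B * (2 / rk k) * ρ k) ^ n) *
              volume (Ak k) := setLIntegral_const _ _
          _ ≤ ENNReal.ofReal ((n.factorial : ℝ) * c ^ n * (B * (2 / rk k) * ρ k) ^ n) *
              (ENNReal.ofReal (rk k ^ d) * v1) := mul_le_mul_right (hAkvol k) _
          _ = ENNReal.ofReal (((n.factorial : ℝ) * c ^ n * (B * (2 / rk k) * ρ k) ^ n) *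
              rk k ^ d) * v1 := by
              rw [ENNReal.ofReal_mul hbk0]
              ring
          _ ≤ ENNReal.ofReal (K * (2⁻¹ : ℝ) ^ k) * v1 :=
              mul_le_mul_left (ENNReal.ofReal_le_ofReal (halg k)) _
      have hgeo : ∀ k : ℕ, ENNReal.ofReal (K * (2⁻¹ : ℝ) ^ k) * v1 =
          (ENNReal.ofReal K * v1) * (2⁻¹ : ℝ≥0∞) ^ k := by
        intro k
        have e2 : ENNReal.ofReal ((2⁻¹ : ℝ) ^ k) = (2⁻¹ : ℝ≥0∞) ^ k := by
          rw [ENNReal.ofReal_pow (by norm_num)]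
          congr 1
          rw [ENNReal.ofReal_inv_of_pos (by norm_num)]
          norm_num
        rw [ENNReal.ofReal_mul hK0, e2]
        ring
      calc ∫⁻ a in Metric.ball (0 : EuclideanSpace ℝ (Fin d)) 1 \ {0}, (‖F a‖₊ : ℝ≥0∞)
          ≤ ∫⁻ a in ⋃ k, Ak k, (‖F a‖₊ : ℝ≥0∞) := lintegral_mono_set hcover
        _ ≤ ∑' k, ∫⁻ a in Ak k, (‖F a‖₊ : ℝ≥0∞) := lintegral_iUnion_le _ _
        _ ≤ ∑' k : ℕ, ENNReal.ofReal (K * (2⁻¹ : ℝ) ^ k) * v1 :=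
            ENNReal.tsum_le_tsum hAkint
        _ = (ENNReal.ofReal K * v1) * ∑' k : ℕ, (2⁻¹ : ℝ≥0∞) ^ k := by
            rw [← ENNReal.tsum_mul_left]
            exact tsum_congr hgeo
        _ < ⊤ := by
            rw [ENNReal.tsum_geometric]
            apply ENNReal.mul_lt_top (ENNReal.mul_lt_top ENNReal.ofReal_lt_top hv1top)
            rw [ENNReal.one_sub_inv_two]
            exact ENNReal.inv_lt_top.2 (by norm_num)
  have hsplit : ({0}ᶜ : Set (EuclideanSpace ℝ (Fin d))) ⊆
      (Metric.ball 0 1 \ {0}) ∪ {x | 1 ≤ ‖x‖} := by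
    intro x hx
    rcases lt_or_ge ‖x‖ 1 with hlt | hge
    · exact Or.inl ⟨mem_ball_zero_iff.2 hlt, hx⟩
    · exact Or.inr hge
  exact (hinner.union houter).mono_set hsplit
end

section
/- Write ℝ^d = ℝ^m × ℝ^{d−m} with 1 ≤ m < d, and define h : ℝ^m → ℝ by h(ξ') = ∫_{ℝ^{d−m}} e^{−4π² φ°((ξ',ξ''))²} dξ''. Then h is continuously differentiable on ℝ^m and decays at a Gaussian rate: h(ξ') ≤ (2λ√π)^{−(d−m)} e^{−4π² λ² |ξ'|²} for all ξ' ∈ ℝ^m. -/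
open Real MeasureTheory
open scoped RealInnerProductSpace


noncomputable def appendCLM (m k : ℕ) :
    (EuclideanSpace ℝ (Fin m) × EuclideanSpace ℝ (Fin k)) →L[ℝ] EuclideanSpace ℝ (Fin (m+k)) :=
  LinearMap.toContinuousLinearMap
  { toFun := fun p => (WithLp.equiv 2 (∀ _ : Fin (m + k), ℝ)).symm
      (Fin.append (WithLp.equiv 2 (∀ _ : Fin m, ℝ) p.1) (WithLp.equiv 2 (∀ _ : Fin k, ℝ) p.2))
    map_add' := by
      intro p q
      ext i
      induction i using Fin.addCases with
      | left j => simp [Fin.append_left]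
      | right j => simp [Fin.append_right]
    map_smul' := by
      intro c p
      ext i
      induction i using Fin.addCases with
      | left j => simp [Fin.append_left]
      | right j => simp [Fin.append_right] }

theorem appendCLM_norm_sq (m k : ℕ) (p : EuclideanSpace ℝ (Fin m) × EuclideanSpace ℝ (Fin k)) :
    ‖appendCLM m k p‖ ^ 2 = ‖p.1‖ ^ 2 + ‖p.2‖ ^ 2 := by
  have h1 : ∀ (n : ℕ) (x : EuclideanSpace ℝ (Fin n)), ‖x‖ ^ 2 = ∑ i, (x i) ^ 2 := by
    intro n x
    rw [EuclideanSpace.norm_eq, sq_sqrt (by positivity)]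
    simp [sq_abs]
  rw [h1, h1, h1, Fin.sum_univ_add]
  simp [appendCLM, Fin.append_left, Fin.append_right]

variable {E : Type*} [NormedAddCommGroup E] [NormedSpace ℝ E]

theorem phi_lip (φ : E → ℝ) (Lam : ℝ) (hLam : 0 ≤ Lam)
    (heven : ∀ ξ, φ (-ξ) = φ ξ)
    (hhomog : ∀ t : ℝ, 0 ≤ t → ∀ ξ, φ (t • ξ) = t * φ ξ)
    (hconv : ConvexOn ℝ Set.univ φ)
    (hup : ∀ ξ, φ ξ ≤ Lam * ‖ξ‖) :
    LipschitzWith Lam.toNNReal φ := by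
  have hsub : ∀ x y : E, φ (x + y) ≤ φ x + φ y := by
    intro x y
    have h2 : φ (x + y) = 2 * φ ((1/2 : ℝ) • x + (1/2 : ℝ) • y) := by
      rw [← hhomog 2 (by norm_num) _]
      congr 1
      rw [smul_add, smul_smul, smul_smul]; norm_num
    have h3 := hconv.2 (Set.mem_univ x) (Set.mem_univ y)
      (by norm_num : (0:ℝ) ≤ 1/2) (by norm_num : (0:ℝ) ≤ 1/2) (by norm_num)
    simp only [smul_eq_mul] at h3
    rw [h2]; linarith
  rw [lipschitzWith_iff_dist_le_mul]
  intro x y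
  rw [Real.dist_eq, dist_eq_norm, Real.coe_toNNReal _ hLam, abs_sub_le_iff]
  constructor
  · have h2 := hsub y (x - y)
    simp only [add_sub_cancel] at h2
    linarith [hup (x - y)]
  · have h1 : φ (y - x) = φ (x - y) := by rw [← heven, neg_sub]
    have h2 := hsub x (y - x)
    simp only [add_sub_cancel] at h2
    have h3 := hup (y - x)
    rw [h1, ← norm_neg, neg_sub] at h3
    linarith

theorem G_nice (φ : E → ℝ) (lam Lam c : ℝ) (hlam : 0 < lam) (hlamLam : lam ≤ Lam) (hc : 0 < c)
    (heven : ∀ ξ, φ (-ξ) = φ ξ)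
    (hhomog : ∀ t : ℝ, 0 ≤ t → ∀ ξ, φ (t • ξ) = t * φ ξ)
    (hconv : ConvexOn ℝ Set.univ φ)
    (hsmooth : ContDiffOn ℝ (⊤ : ℕ∞) φ {0}ᶜ)
    (hlow : ∀ ξ, lam * ‖ξ‖ ≤ φ ξ) (hup : ∀ ξ, φ ξ ≤ Lam * ‖ξ‖) :
    ContDiff ℝ 1 (fun x => Real.exp (-c * φ x ^ 2)) ∧
    (∀ x, ‖fderiv ℝ (fun x => Real.exp (-c * φ x ^ 2)) x‖
        ≤ 2 * c * Lam ^ 2 * ‖x‖ * Real.exp (-c * lam ^ 2 * ‖x‖ ^ 2)) := by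
  have hLam : 0 ≤ Lam := le_trans hlam.le hlamLam
  have hlip := phi_lip φ Lam hLam heven hhomog hconv hup
  have hφ0 : φ 0 = 0 := by
    have := hhomog 0 le_rfl 0; simpa using this
  have hφnn : ∀ x, 0 ≤ φ x := fun x => le_trans (by positivity) (hlow x)
  have hdφ : ∀ x : E, x ≠ 0 → DifferentiableAt ℝ φ x := by
    intro x hx
    have : ContDiffAt ℝ (⊤ : ℕ∞) φ x :=
      hsmooth.contDiffAt (isOpen_compl_singleton.mem_nhds (by simpa using hx))
    exact this.differentiableAt (by simp)
  have hfdφ_le : ∀ x : E, ‖fderiv ℝ φ x‖ ≤ Lam := by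
    intro x
    simpa [Real.coe_toNNReal _ hLam] using norm_fderiv_le_of_lipschitz ℝ (x₀ := x) hlip
  set g : E → ℝ := fun x => φ x ^ 2 with hgdef
  have hgd : ∀ x : E, HasFDerivAt g ((2 * φ x) • fderiv ℝ φ x) x := by
    intro x
    by_cases hx : x = 0
    · subst hx
      have h0 : HasFDerivAt g (0 : E →L[ℝ] ℝ) 0 := by
        rw [hasFDerivAt_iff_isLittleO_nhds_zero]
        have h1 : (fun h : E => g (0 + h) - g 0 - (0 : E →L[ℝ] ℝ) h)
            =O[nhds 0] fun h : E => ‖h‖ * ‖h‖ := by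
          apply Asymptotics.IsBigO.of_bound (Lam ^ 2)
          filter_upwards with h
          have : φ h ^ 2 ≤ (Lam * ‖h‖) ^ 2 := by
            apply pow_le_pow_left₀ (hφnn h) (hup h)
          simp only [hgdef, zero_add, hφ0, ContinuousLinearMap.zero_apply, sub_zero,
            ne_eq, OfNat.ofNat_ne_zero, not_false_eq_true, zero_pow, Real.norm_eq_abs]
          rw [abs_of_nonneg (by positivity), abs_of_nonneg (by positivity)]
          nlinarith [norm_nonneg h]
        have h2 : (fun h : E => ‖h‖ * ‖h‖) =o[nhds 0] fun h : E => h := by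
          rw [← Asymptotics.isLittleO_norm_right]
          have ho : (fun h : E => ‖h‖) =o[nhds 0] fun _ : E => (1 : ℝ) := by
            rw [Asymptotics.isLittleO_one_iff]
            simpa using (continuous_norm.tendsto (0 : E))
          simpa using ho.mul_isBigO (Asymptotics.isBigO_refl (fun h : E => ‖h‖) _)
        exact h1.trans_isLittleO h2
      simpa [hφ0] using h0
    · have hd := hdφ x hx
      have hmul := hd.hasFDerivAt.mul hd.hasFDerivAt
      have : g = fun x => φ x * φ x := by ext y; simp [hgdef, sq]
      rw [this]
      have e : (2 * φ x) • fderiv ℝ φ x = φ x • fderiv ℝ φ x + φ x • fderiv ℝ φ x := by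
        rw [two_mul, add_smul]
      rw [e]; exact hmul
  have hgdiff : Differentiable ℝ g := fun x => (hgd x).differentiableAt
  have hfg : ∀ x, fderiv ℝ g x = (2 * φ x) • fderiv ℝ φ x := fun x => (hgd x).fderiv
  have hfg_le : ∀ x, ‖fderiv ℝ g x‖ ≤ 2 * Lam ^ 2 * ‖x‖ := by
    intro x
    rw [hfg, norm_smul, Real.norm_eq_abs, abs_of_nonneg (mul_nonneg (by norm_num) (hφnn x))]
    calc 2 * φ x * ‖fderiv ℝ φ x‖ ≤ 2 * (Lam * ‖x‖) * Lam := by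
          apply mul_le_mul (by linarith [hup x]) (hfdφ_le x) (norm_nonneg _)
            (mul_nonneg (by norm_num) (mul_nonneg hLam (norm_nonneg _)))
      _ = 2 * Lam ^ 2 * ‖x‖ := by ring
  have hcont : Continuous (fderiv ℝ g) := by
    rw [continuous_iff_continuousAt]
    intro x
    by_cases hx : x = 0
    · subst hx
      have : fderiv ℝ g 0 = 0 := by rw [hfg]; simp [hφ0]
      unfold ContinuousAt
      rw [this]
      apply squeeze_zero_norm hfg_le
      have : Continuous fun y : E => 2 * Lam ^ 2 * ‖y‖ := by continuity
      simpa using this.tendsto 0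
    · have heq : fderiv ℝ g = fun y => (2 * φ y) • fderiv ℝ φ y := funext hfg
      rw [heq]
      have hφc : Continuous φ := hlip.continuous
      have hfc : ContinuousOn (fderiv ℝ φ) {0}ᶜ :=
        hsmooth.continuousOn_fderiv_of_isOpen isOpen_compl_singleton (by simp)
      exact ((continuous_const.mul hφc).continuousAt).smul
        (hfc.continuousAt (isOpen_compl_singleton.mem_nhds (by simpa using hx)))
  have hgc1 : ContDiff ℝ 1 g := contDiff_one_iff_fderiv.mpr ⟨hgdiff, hcont⟩
  have hGd : ∀ x, HasFDerivAt (fun x => Real.exp (-c * g x))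
      (Real.exp (-c * g x) • ((-c) • ((2 * φ x) • fderiv ℝ φ x))) x := by
    intro x
    have hu : HasFDerivAt (fun x => -c * g x) ((-c) • ((2 * φ x) • fderiv ℝ φ x)) x :=
      (hgd x).const_mul (-c)
    exact (Real.hasDerivAt_exp (-c * g x)).comp_hasFDerivAt x hu
  constructor
  · exact (Real.contDiff_exp.of_le le_top).comp (contDiff_const.mul hgc1)
  · intro x
    rw [(hGd x).fderiv, norm_smul, norm_smul, norm_smul,
      Real.norm_eq_abs, Real.norm_eq_abs, Real.norm_eq_abs,
      abs_of_nonneg (Real.exp_nonneg _), abs_neg, abs_of_pos hc,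
      abs_of_nonneg (mul_nonneg (by norm_num) (hφnn x))]
    have hexp : Real.exp (-c * g x) ≤ Real.exp (-c * lam ^ 2 * ‖x‖ ^ 2) := by
      apply Real.exp_le_exp.mpr
      have h1 : (lam * ‖x‖) ^ 2 ≤ φ x ^ 2 := pow_le_pow_left₀ (by positivity) (hlow x) 2
      show -c * φ x ^ 2 ≤ -c * lam ^ 2 * ‖x‖ ^ 2
      nlinarith [mul_pow lam ‖x‖ 2]
    calc Real.exp (-c * g x) * (c * (2 * φ x * ‖fderiv ℝ φ x‖))
        ≤ Real.exp (-c * lam ^ 2 * ‖x‖ ^ 2) * (c * (2 * (Lam * ‖x‖) * Lam)) := by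
          apply mul_le_mul hexp ?_ ?_ (Real.exp_nonneg _)
          · apply mul_le_mul_of_nonneg_left ?_ hc.le
            apply mul_le_mul (by linarith [hup x]) (hfdφ_le x) (norm_nonneg _)
              (mul_nonneg (by norm_num) (mul_nonneg hLam (norm_nonneg _)))
          · have := hφnn x
            have := norm_nonneg (fderiv ℝ φ x)
            positivity
      _ = 2 * c * Lam ^ 2 * ‖x‖ * Real.exp (-c * lam ^ 2 * ‖x‖ ^ 2) := by ring

variable {V : Type*} [NormedAddCommGroup V] [InnerProductSpace ℝ V] [FiniteDimensional ℝ V]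
  [MeasurableSpace V] [BorelSpace V]

theorem integrable_gauss {b : ℝ} (hb : 0 < b) :
    Integrable (fun v : V => Real.exp (-b * ‖v‖ ^ 2)) := by
  have hc := GaussianFourier.integrable_cexp_neg_mul_sq_norm_add
    (V := V) (b := (b : ℂ)) (by simpa using hb) 0 0
  apply hc.norm.congr
  filter_upwards with v
  simp [Complex.norm_exp]
  left
  norm_cast

theorem sqrt_le_exp {s : ℝ} (hs : 0 ≤ s) : Real.sqrt s ≤ Real.exp s := by
  have h1 : Real.sqrt s ≤ 1 + s := by
    calc Real.sqrt s ≤ Real.sqrt ((1 + s) ^ 2) := Real.sqrt_le_sqrt (by nlinarith)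
      _ = 1 + s := Real.sqrt_sq (by linarith)
  exact h1.trans (by linarith [Real.add_one_le_exp s])

theorem t_mul_exp_le {b t : ℝ} (hb : 0 < b) (ht : 0 ≤ t) :
    t * Real.exp (-b * t ^ 2) ≤ Real.sqrt (2 / b) * Real.exp (-(b / 2) * t ^ 2) := by
  have key : t ≤ Real.sqrt (2 / b) * Real.exp (b / 2 * t ^ 2) := by
    have h1 : t = Real.sqrt (2 / b) * Real.sqrt (b / 2 * t ^ 2) := by
      rw [← Real.sqrt_mul (by positivity)]
      rw [show 2 / b * (b / 2 * t ^ 2) = t ^ 2 by field_simp]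
      exact (Real.sqrt_sq ht).symm
    calc t = Real.sqrt (2 / b) * Real.sqrt (b / 2 * t ^ 2) := h1
      _ ≤ Real.sqrt (2 / b) * Real.exp (b / 2 * t ^ 2) :=
        mul_le_mul_of_nonneg_left (sqrt_le_exp (by positivity)) (Real.sqrt_nonneg _)
  calc t * Real.exp (-b * t ^ 2)
      ≤ (Real.sqrt (2 / b) * Real.exp (b / 2 * t ^ 2)) * Real.exp (-b * t ^ 2) :=
        mul_le_mul_of_nonneg_right key (Real.exp_nonneg _)
    _ = Real.sqrt (2 / b) * Real.exp (-(b / 2) * t ^ 2) := by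
        rw [mul_assoc, ← Real.exp_add]; ring_nf

theorem integrable_norm_gauss {b : ℝ} (hb : 0 < b) :
    Integrable (fun v : V => ‖v‖ * Real.exp (-b * ‖v‖ ^ 2)) := by
  apply Integrable.mono' ((integrable_gauss (V := V) (b := b/2) (by positivity)).const_mul
    (Real.sqrt (2 / b)))
  · apply Continuous.aestronglyMeasurable
    continuity
  · filter_upwards with v
    rw [Real.norm_eq_abs, abs_of_nonneg (by positivity)]
    simpa [neg_div] using t_mul_exp_le hb (norm_nonneg v)

set_option maxHeartbeats 2000000 in
/-- Writing `ℝ^d = ℝ^m × ℝ^{d-m}` (here `d = m + k`, `k ≥ 1`) and setting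
`h(ξ') = ∫_{ℝ^{d-m}} e^{-4π² φ°((ξ',ξ''))²} dξ''`, the function `h` is continuously
differentiable on `ℝ^m` and decays at a Gaussian rate:
`h(ξ') ≤ (2λ√π)^{-(d-m)} e^{-4π²λ²|ξ'|²}` for all `ξ'`. -/
theorem stmt_16 (m k : ℕ) (hm : 1 ≤ m) (hk : 1 ≤ k)
    (φ : EuclideanSpace ℝ (Fin (m + k)) → ℝ)
    (lam Lam : ℝ) (hlam : 0 < lam) (hlamLam : lam ≤ Lam)
    (heven : ∀ ξ, φ (-ξ) = φ ξ)
    (hhomog : ∀ t : ℝ, 0 ≤ t → ∀ ξ, φ (t • ξ) = t * φ ξ)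
    (hconv : ConvexOn ℝ Set.univ φ)
    (hsmooth : ContDiffOn ℝ (⊤ : ℕ∞) φ {0}ᶜ)
    (hlow : ∀ ξ, lam * ‖ξ‖ ≤ φ ξ) (hup : ∀ ξ, φ ξ ≤ Lam * ‖ξ‖)
    (h : EuclideanSpace ℝ (Fin m) → ℝ)
    (hdef : ∀ ξ' : EuclideanSpace ℝ (Fin m),
      h ξ' = ∫ ξ'' : EuclideanSpace ℝ (Fin k),
        Real.exp (-(4 * π ^ 2) *
          φ ((WithLp.equiv 2 (∀ _ : Fin (m + k), ℝ)).symm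
            (Fin.append (WithLp.equiv 2 (∀ _ : Fin m, ℝ) ξ')
              (WithLp.equiv 2 (∀ _ : Fin k, ℝ) ξ''))) ^ 2)) :
    ContDiff ℝ 1 h ∧
    ∀ ξ' : EuclideanSpace ℝ (Fin m),
      h ξ' ≤ 1 / (2 * lam * Real.sqrt π) ^ k * Real.exp (-(4 * π ^ 2) * lam ^ 2 * ‖ξ'‖ ^ 2) := by
  have hLam : 0 ≤ Lam := le_trans hlam.le hlamLam
  set c : ℝ := 4 * π ^ 2 with hcdef
  have hc : 0 < c := by rw [hcdef]; positivity
  set b : ℝ := c * lam ^ 2 with hbdef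
  have hb : 0 < b := by rw [hbdef]; exact mul_pos hc (pow_pos hlam 2)
  set A : (EuclideanSpace ℝ (Fin m) × EuclideanSpace ℝ (Fin k)) →L[ℝ] EuclideanSpace ℝ (Fin (m+k)) := appendCLM m k with hAdef
  set G : EuclideanSpace ℝ (Fin (m + k)) → ℝ := fun x => Real.exp (-c * φ x ^ 2) with hGdef
  obtain ⟨hG1, hGb⟩ := G_nice φ lam Lam c hlam hlamLam hc heven hhomog hconv hsmooth hlow hup
  rw [← hGdef] at hG1 hGb
  have hGb' : ∀ x, ‖fderiv ℝ G x‖ ≤ 2 * c * Lam ^ 2 * ‖x‖ * Real.exp (-b * ‖x‖ ^ 2) := by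
    intro x
    have := hGb x
    rwa [show -c * lam ^ 2 * ‖x‖ ^ 2 = -b * ‖x‖ ^ 2 by rw [hbdef]; ring] at this
  have hdef' : h = fun x : EuclideanSpace ℝ (Fin m) => ∫ y : EuclideanSpace ℝ (Fin k), G (A (x, y)) := by
    funext x; rw [hdef]; rfl
  have hA2 : ∀ (x : EuclideanSpace ℝ (Fin m)) (y : EuclideanSpace ℝ (Fin k)), ‖A (x, y)‖ ^ 2 = ‖x‖ ^ 2 + ‖y‖ ^ 2 := by
    intro x y; exact appendCLM_norm_sq m k (x, y)
  have hAy : ∀ (x : EuclideanSpace ℝ (Fin m)) (y : EuclideanSpace ℝ (Fin k)), ‖y‖ ≤ ‖A (x, y)‖ := by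
    intro x y
    have h2 := hA2 x y
    apply le_of_pow_le_pow_left₀ two_ne_zero (norm_nonneg _)
    have := sq_nonneg ‖x‖
    linarith
  have hAxy : ∀ (x : EuclideanSpace ℝ (Fin m)) (y : EuclideanSpace ℝ (Fin k)), ‖A (x, y)‖ ≤ ‖x‖ + ‖y‖ := by
    intro x y
    have h2 := hA2 x y
    apply le_of_pow_le_pow_left₀ two_ne_zero (by positivity)
    nlinarith [norm_nonneg x, norm_nonneg y, mul_nonneg (norm_nonneg x) (norm_nonneg y)]
  have hGA_le : ∀ (x : EuclideanSpace ℝ (Fin m)) (y : EuclideanSpace ℝ (Fin k)),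
      G (A (x, y)) ≤ Real.exp (-b * ‖x‖ ^ 2) * Real.exp (-b * ‖y‖ ^ 2) := by
    intro x y
    rw [hGdef, ← Real.exp_add]
    apply Real.exp_le_exp.mpr
    have h1 : (lam * ‖A (x, y)‖) ^ 2 ≤ φ (A (x, y)) ^ 2 :=
      pow_le_pow_left₀ (mul_nonneg hlam.le (norm_nonneg _)) (hlow _) 2
    have h2 := hA2 x y
    have h4 : lam ^ 2 * (‖x‖ ^ 2 + ‖y‖ ^ 2) ≤ φ (A (x, y)) ^ 2 := by
      rw [← h2, ← mul_pow]; exact h1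
    have h5 := mul_le_mul_of_nonneg_left h4 hc.le
    rw [hbdef]
    ring_nf
    ring_nf at h5
    linarith
  have hGcont : Continuous G := hG1.continuous
  have hGdiff : Differentiable ℝ G := hG1.differentiable (by norm_num)
  have hfGcont : Continuous (fderiv ℝ G) := (contDiff_one_iff_fderiv.mp hG1).2
  set B : EuclideanSpace ℝ (Fin m) →L[ℝ] EuclideanSpace ℝ (Fin (m+k)) := A.comp (ContinuousLinearMap.inl ℝ (EuclideanSpace ℝ (Fin m)) (EuclideanSpace ℝ (Fin k))) with hBdef
  have hBval : ∀ x : EuclideanSpace ℝ (Fin m), ‖B x‖ = ‖x‖ := by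
    intro x
    have h2 : ‖B x‖ ^ 2 = ‖x‖ ^ 2 := by
      have := hA2 x 0
      simpa [hBdef] using this
    calc ‖B x‖ = Real.sqrt (‖B x‖ ^ 2) := (Real.sqrt_sq (norm_nonneg _)).symm
      _ = Real.sqrt (‖x‖ ^ 2) := by rw [h2]
      _ = ‖x‖ := Real.sqrt_sq (norm_nonneg _)
  have hBle : ‖B‖ ≤ 1 := by
    apply ContinuousLinearMap.opNorm_le_bound _ zero_le_one
    intro x; rw [hBval, one_mul]
  have hGnn : ∀ x, 0 ≤ G x := by
    intro x; rw [hGdef]; exact (Real.exp_pos _).le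
  clear_value c b A G B
  set f' : EuclideanSpace ℝ (Fin m) → EuclideanSpace ℝ (Fin k) → (EuclideanSpace ℝ (Fin m) →L[ℝ] ℝ) :=
    fun x y => (fderiv ℝ G (A (x, y))).comp B with hf'def
  have hF'd : ∀ (y : EuclideanSpace ℝ (Fin k)) (x : EuclideanSpace ℝ (Fin m)), HasFDerivAt (fun x => G (A (x, y))) (f' x y) x := by
    intro y x
    have h1 : HasFDerivAt (fun x : EuclideanSpace ℝ (Fin m) => A (x, y)) B x := by
      rw [hBdef]
      exact A.hasFDerivAt.comp x (hasFDerivAt_prodMk_left x y)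
    exact (hGdiff (A (x, y))).hasFDerivAt.comp x h1
  have hF'b : ∀ (x : EuclideanSpace ℝ (Fin m)) (y : EuclideanSpace ℝ (Fin k)),
      ‖f' x y‖ ≤ 2 * c * Lam ^ 2 * (‖x‖ + ‖y‖) * Real.exp (-b * ‖y‖ ^ 2) := by
    intro x y
    calc ‖f' x y‖ ≤ ‖fderiv ℝ G (A (x, y))‖ * ‖B‖ := ContinuousLinearMap.opNorm_comp_le _ _
      _ ≤ ‖fderiv ℝ G (A (x, y))‖ * 1 :=
          mul_le_mul_of_nonneg_left hBle (norm_nonneg _)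
      _ = ‖fderiv ℝ G (A (x, y))‖ := mul_one _
      _ ≤ 2 * c * Lam ^ 2 * ‖A (x, y)‖ * Real.exp (-b * ‖A (x, y)‖ ^ 2) := hGb' _
      _ ≤ 2 * c * Lam ^ 2 * (‖x‖ + ‖y‖) * Real.exp (-b * ‖y‖ ^ 2) := by
          have hnn : (0:ℝ) ≤ 2 * c * Lam ^ 2 :=
            mul_nonneg (mul_nonneg (by norm_num) hc.le) (sq_nonneg Lam)
          apply mul_le_mul
          · exact mul_le_mul_of_nonneg_left (hAxy x y) hnn
          · apply Real.exp_le_exp.mpr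
            have h1 := hAy x y
            have h2 : ‖y‖ ^ 2 ≤ ‖A (x, y)‖ ^ 2 := pow_le_pow_left₀ (norm_nonneg _) h1 2
            nlinarith [mul_le_mul_of_nonneg_left h2 hb.le]
          · exact Real.exp_nonneg _
          · exact mul_nonneg hnn (by positivity)
  -- continuity in y of the integrands
  have hcont_y : ∀ x : EuclideanSpace ℝ (Fin m), Continuous (fun y : EuclideanSpace ℝ (Fin k) => G (A (x, y))) := by
    intro x
    exact hGcont.comp (A.continuous.comp (Continuous.prodMk_right x))
  have hcont_f'y : ∀ x : EuclideanSpace ℝ (Fin m), Continuous (fun y : EuclideanSpace ℝ (Fin k) => f' x y) := by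
    intro x
    exact (hfGcont.comp (A.continuous.comp (Continuous.prodMk_right x))).clm_comp continuous_const
  have hcont_f'x : ∀ y : EuclideanSpace ℝ (Fin k), Continuous (fun x : EuclideanSpace ℝ (Fin m) => f' x y) := by
    intro y
    have : Continuous (fun x : EuclideanSpace ℝ (Fin m) => A (x, y)) :=
      A.continuous.comp (continuous_id.prodMk continuous_const)
    exact (hfGcont.comp this).clm_comp continuous_const
  have hFint : ∀ x : EuclideanSpace ℝ (Fin m), Integrable (fun y : EuclideanSpace ℝ (Fin k) => G (A (x, y))) := by
    intro x
    apply Integrable.mono' ((integrable_gauss hb).const_mul (Real.exp (-b * ‖x‖ ^ 2)))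
      (hcont_y x).aestronglyMeasurable
    filter_upwards with y
    rw [Real.norm_eq_abs, abs_of_nonneg (hGnn _)]
    exact hGA_le x y
  have hdom : ∀ (x₀ x : EuclideanSpace ℝ (Fin m)), x ∈ Metric.ball x₀ 1 →
      ∀ y : EuclideanSpace ℝ (Fin k), ‖f' x y‖ ≤ 2 * c * Lam ^ 2 *
        ((‖x₀‖ + 1) * Real.exp (-b * ‖y‖ ^ 2) + ‖y‖ * Real.exp (-b * ‖y‖ ^ 2)) := by
    intro x₀ x hx y
    have hxR : ‖x‖ ≤ ‖x₀‖ + 1 := by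
      have h1 := mem_ball_iff_norm.mp hx
      have h2 := norm_sub_norm_le x x₀
      linarith
    refine (hF'b x y).trans ?_
    have he : 0 ≤ Real.exp (-b * ‖y‖ ^ 2) := Real.exp_nonneg _
    have hnn : (0:ℝ) ≤ 2 * c * Lam ^ 2 :=
      mul_nonneg (mul_nonneg (by norm_num) hc.le) (sq_nonneg Lam)
    have h3 : (‖x‖ + ‖y‖) * Real.exp (-b * ‖y‖ ^ 2)
        ≤ (‖x₀‖ + 1) * Real.exp (-b * ‖y‖ ^ 2) + ‖y‖ * Real.exp (-b * ‖y‖ ^ 2) := by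
      nlinarith [norm_nonneg y]
    calc 2 * c * Lam ^ 2 * (‖x‖ + ‖y‖) * Real.exp (-b * ‖y‖ ^ 2)
        = 2 * c * Lam ^ 2 * ((‖x‖ + ‖y‖) * Real.exp (-b * ‖y‖ ^ 2)) := by ring
      _ ≤ 2 * c * Lam ^ 2 *
          ((‖x₀‖ + 1) * Real.exp (-b * ‖y‖ ^ 2) + ‖y‖ * Real.exp (-b * ‖y‖ ^ 2)) :=
          mul_le_mul_of_nonneg_left h3 hnn
  have hbint : ∀ x₀ : EuclideanSpace ℝ (Fin m),
      Integrable (fun y : EuclideanSpace ℝ (Fin k) => 2 * c * Lam ^ 2 *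
        ((‖x₀‖ + 1) * Real.exp (-b * ‖y‖ ^ 2) + ‖y‖ * Real.exp (-b * ‖y‖ ^ 2))) := by
    intro x₀
    apply Integrable.const_mul
    exact ((integrable_gauss hb).const_mul _).add (integrable_norm_gauss hb)
  -- dominating function for derivative near x₀
  have key : ∀ x₀ : EuclideanSpace ℝ (Fin m), HasFDerivAt h (∫ y : EuclideanSpace ℝ (Fin k), f' x₀ y) x₀ := by
    intro x₀
    rw [hdef']
    apply hasFDerivAt_integral_of_dominated_of_fderiv_le (Metric.ball_mem_nhds x₀ one_pos)
      (Filter.Eventually.of_forall fun x => (hcont_y x).aestronglyMeasurable)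
      (hFint x₀) (hcont_f'y x₀).aestronglyMeasurable
      (Filter.Eventually.of_forall fun y => fun x hx => hdom x₀ x hx y)
      (hbint x₀)
      (Filter.Eventually.of_forall fun y => fun x _ => hF'd y x)
  constructor
  · rw [contDiff_one_iff_fderiv]
    refine ⟨fun x => (key x).differentiableAt, ?_⟩
    have hfd : fderiv ℝ h = fun x => ∫ y : EuclideanSpace ℝ (Fin k), f' x y := funext fun x => (key x).fderiv
    rw [hfd, continuous_iff_continuousAt]
    intro x₀
    apply continuousAt_of_dominated
      (Filter.Eventually.of_forall fun x => (hcont_f'y x).aestronglyMeasurable)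
      ?_ (hbint x₀)
      (Filter.Eventually.of_forall fun y => (hcont_f'x y).continuousAt)
    · filter_upwards [Metric.ball_mem_nhds x₀ one_pos] with x hx
      filter_upwards with y
      exact hdom x₀ x hx y
  · intro ξ'
    rw [hdef']
    have step1 : (∫ y : EuclideanSpace ℝ (Fin k), G (A (ξ', y)))
        ≤ ∫ y : EuclideanSpace ℝ (Fin k), Real.exp (-b * ‖ξ'‖ ^ 2) * Real.exp (-b * ‖y‖ ^ 2) :=
      integral_mono (hFint ξ') ((integrable_gauss hb).const_mul _) (fun y => hGA_le ξ' y)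
    have step2 : (∫ y : EuclideanSpace ℝ (Fin k), Real.exp (-b * ‖ξ'‖ ^ 2) * Real.exp (-b * ‖y‖ ^ 2))
        = Real.exp (-b * ‖ξ'‖ ^ 2) * (π / b) ^ ((k : ℝ) / 2) := by
      rw [integral_const_mul, GaussianFourier.integral_rexp_neg_mul_sq_norm hb]
      norm_num [finrank_euclideanSpace_fin]
    have step3 : (π / b) ^ ((k : ℝ) / 2) = 1 / (2 * lam * Real.sqrt π) ^ k := by
      set a : ℝ := 2 * lam * Real.sqrt π with hadef
      have ha : 0 < a := by
        rw [hadef]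
        exact mul_pos (mul_pos two_pos hlam) (Real.sqrt_pos.mpr pi_pos)
      have hsq : Real.sqrt π ^ 2 = π := Real.sq_sqrt pi_pos.le
      have hπb : π / b = (1 / a) ^ 2 := by
        rw [hbdef, hcdef, hadef]
        rw [div_pow, one_pow, mul_pow, mul_pow, hsq]
        rw [div_eq_div_iff (by positivity : (0:ℝ) < 4 * π ^ 2 * lam ^ 2).ne' (by positivity : (0:ℝ) < 2 ^ 2 * lam ^ 2 * π).ne']
        ring
      calc (π / b) ^ ((k:ℝ)/2) = ((1/a) ^ (2:ℕ)) ^ ((k:ℝ)/2) := by rw [hπb]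
        _ = (1/a) ^ (((2:ℕ):ℝ) * ((k:ℝ)/2)) := by
            rw [← Real.rpow_natCast (1/a) 2, ← Real.rpow_mul (by positivity)]
        _ = (1/a) ^ ((k:ℝ)) := by congr 1; push_cast; ring
        _ = (1/a) ^ k := Real.rpow_natCast _ k
        _ = 1 / a ^ k := one_div_pow _ _
    calc (∫ y : EuclideanSpace ℝ (Fin k), G (A (ξ', y)))
        ≤ Real.exp (-b * ‖ξ'‖ ^ 2) * (π / b) ^ ((k : ℝ) / 2) := step1.trans_eq step2
      _ = 1 / (2 * lam * Real.sqrt π) ^ k * Real.exp (-c * lam ^ 2 * ‖ξ'‖ ^ 2) := by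
          rw [step3, mul_comm]
          congr 2
          rw [hbdef]; ring
end
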